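/- arXiv:2307.01449 — 2 statements merged into one kernel-verified Lean document; each statement's English description precedes it below -/
import Mathlib

section
/- Let α₀(X) = E[Y | X, T=t, S=0], e₀(X) = P(T=t | X, S=0), p₀(X) = P(S=1 | X), e₁(X) = P(T=t | X, S=1). Define φ(t) = μ₀(X) − μ₁(X) + [1{T=t}(1−S)/(e₀(X)(1−p₀(X)))](Y − μ₀(X)) − [1{T=t}S/(e₁(X)p₀(X))](Y − μ₁(X)), where μ₀(X) = E[Y | X, T=t, S=0] and μ₁(X) = E[Y | X, T=t, S=1]. Then E[φ(t)] = E_X[μ₀(X) − μ₁(X)] = θ(t). -/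
open MeasureTheory ProbabilityTheory Filter

set_option maxHeartbeats 1600000

/-- `m ∘ X` is a version of the conditional mean `E[Z ∣ X]` on the event `A`:
for every bounded measurable test function `g`,
`∫_A g(X) Z dP = ∫_A g(X) m(X) dP`. -/
def IsCondMeanOn {Ω : Type*} [MeasurableSpace Ω] (P : Measure Ω) (X : Ω → ℝ)
    (A : Set Ω) (Z : Ω → ℝ) (m : ℝ → ℝ) : Prop :=
  Measurable m ∧ ∀ g : ℝ → ℝ, Measurable g → (∀ x, |g x| ≤ 1) →
    ∫ ω in A, g (X ω) * Z ω ∂P = ∫ ω in A, g (X ω) * m (X ω) ∂P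

private lemma indfun_meas : Measurable (fun r : ℝ => if r = 0 then (0:ℝ) else 1) := by
  have h : MeasurableSet {r : ℝ | r = 0} := by
    simpa using (measurableSet_singleton (0:ℝ))
  exact Measurable.ite h measurable_const measurable_const

/-- Core lemma: one correction term of the doubly robust score has zero mean and is
integrable, even without measurability assumptions on `T, S, X`; the needed a.e.
measurability is extracted from the conditional mean identities themselves. -/
private lemma piece {Ω : Type*} [MeasurableSpace Ω] (P : Measure Ω) [IsProbabilityMeasure P]
    (Y T X : Ω → ℝ) (t : ℝ) (B : Set Ω) (χ : Ω → ℝ)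
    (μ e q : ℝ → ℝ) (hem : Measurable e) (hqm : Measurable q)
    (ε : ℝ) (hε : 0 < ε) (hε2 : ε ≤ 1 - ε)
    (hYInt : Integrable Y P) (hμInt : Integrable (fun ω => μ (X ω)) P)
    (hχAE : AEMeasurable χ P) (hχ1 : ∀ ω ∈ B, χ ω = 1) (hχ0 : ∀ ω, ω ∉ B → χ ω = 0)
    (hqAE : AEMeasurable (fun ω => q (X ω)) P)
    (hbde : ∀ᵐ ω ∂P, ε ≤ e (X ω) ∧ e (X ω) ≤ 1 - ε)
    (hbdq : ∀ᵐ ω ∂P, ε ≤ q (X ω) ∧ q (X ω) ≤ 1)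
    (hμh : ∀ g : ℝ → ℝ, Measurable g → (∀ x, |g x| ≤ 1) →
      ∫ ω in ({ω | T ω = t} ∩ B), g (X ω) * Y ω ∂P
        = ∫ ω in ({ω | T ω = t} ∩ B), g (X ω) * μ (X ω) ∂P)
    (heh : ∀ g : ℝ → ℝ, Measurable g → (∀ x, |g x| ≤ 1) →
      ∫ ω in B, g (X ω) * (if T ω = t then 1 else 0) ∂P
        = ∫ ω in B, g (X ω) * e (X ω) ∂P) :
    Integrable (fun ω => ((if T ω = t then (1:ℝ) else 0) * χ ω) / (e (X ω) * q (X ω))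
      * (Y ω - μ (X ω))) P ∧
    ∫ ω, ((if T ω = t then (1:ℝ) else 0) * χ ω) / (e (X ω) * q (X ω))
      * (Y ω - μ (X ω)) ∂P = 0 := by
  classical
  set F : Ω → ℝ := fun ω => ((if T ω = t then (1:ℝ) else 0) * χ ω) / (e (X ω) * q (X ω))
      * (Y ω - μ (X ω)) with hFdef
  set ind : Ω → ℝ := fun ω => if T ω = t then (1:ℝ) else 0 with hinddef
  -- degenerate case helper
  have degenerate : (∀ᵐ ω ∂P, ind ω * χ ω = 0) →
      Integrable F P ∧ ∫ ω, F ω ∂P = 0 := by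
    intro h0
    have hFz : F =ᵐ[P] fun _ => (0:ℝ) := by
      filter_upwards [h0] with ω h
      simp only [hFdef, hinddef] at h ⊢
      rw [h]
      simp
    refine ⟨(integrable_const (0:ℝ)).congr hFz.symm, ?_⟩
    rw [integral_congr_ae hFz]
    simp
  -- B is null measurable
  have hBset : B = χ ⁻¹' {1} := by
    ext ω
    simp only [Set.mem_preimage, Set.mem_singleton_iff]
    constructor
    · intro h; exact hχ1 ω h
    · intro h
      by_contra hb
      rw [hχ0 ω hb] at h
      exact one_ne_zero h.symm
  have hBnm : NullMeasurableSet B P := by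
    rw [hBset]
    exact hχAE.nullMeasurable (measurableSet_singleton 1)
  set MB := toMeasurable P B with hMBdef
  have hMBm : MeasurableSet MB := measurableSet_toMeasurable P B
  have hMBae : MB =ᵐ[P] B := hBnm.toMeasurable_ae_eq
  have hrB : P.restrict B = P.restrict MB := (Measure.restrict_congr_set hMBae).symm
  have hBsub : B ⊆ MB := subset_toMeasurable P B
  -- the clamped test function for e
  set ge : ℝ → ℝ := fun x => ε / max (e x) ε with hgedef
  have hgem : Measurable ge := measurable_const.div (hem.max measurable_const)
  have hgepos : ∀ x, 0 < ge x := fun x =>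
    div_pos hε (lt_of_lt_of_le hε (le_max_right _ _))
  have hgele : ∀ x, ge x ≤ 1 := fun x => by
    rw [div_le_one (lt_of_lt_of_le hε (le_max_right _ _))]
    exact le_max_right _ _
  have hgebd : ∀ x, |ge x| ≤ 1 := fun x => by
    rw [abs_of_pos (hgepos x)]; exact hgele x
  have hgee : ∀ᵐ ω ∂P, ge (X ω) * e (X ω) = ε ∧ ε ≤ ge (X ω) := by
    filter_upwards [hbde] with ω h
    obtain ⟨h1, h2⟩ := h
    have hepos : 0 < e (X ω) := lt_of_lt_of_le hε h1
    have hmax : max (e (X ω)) ε = e (X ω) := max_eq_left h1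
    constructor
    · rw [hgedef]; simp only []
      rw [hmax, div_mul_cancel₀ _ hepos.ne']
    · rw [hgedef]; simp only []
      rw [hmax, le_div_iff₀ hepos]
      nlinarith
  have h1 := heh ge hgem hgebd
  rw [hrB] at h1
  have hR1 : ∫ ω in MB, ge (X ω) * e (X ω) ∂P = (P MB).toReal * ε := by
    have hc : (fun ω => ge (X ω) * e (X ω)) =ᵐ[P.restrict MB] (fun _ => ε) :=
      ae_restrict_of_ae (hgee.mono fun ω h => h.1)
    rw [integral_congr_ae hc, setIntegral_const, smul_eq_mul]
    rfl
  rcases eq_or_ne (P MB) 0 with hMB0 | hMB0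
  · -- B is null
    apply degenerate
    have hnm : ∀ᵐ ω ∂P, ω ∉ MB := by
      rw [ae_iff]
      simpa using hMB0
    filter_upwards [hnm] with ω h
    rw [hχ0 ω (fun hb => h (hBsub hb))]
    ring
  · have hβpos : 0 < (P MB).toReal :=
      ENNReal.toReal_pos hMB0 (measure_ne_top P MB)
    set v : Ω → ℝ := fun ω => ge (X ω) * (if T ω = t then (1:ℝ) else 0) with hvdef
    have hvint : Integrable v (P.restrict MB) := by
      by_contra hni
      rw [integral_undef hni, hR1] at h1
      nlinarith
    have hindv : ind = (fun r : ℝ => if r = 0 then (0:ℝ) else 1) ∘ v := by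
      funext ω
      by_cases h : T ω = t
      · simp [hinddef, hvdef, h, (hgepos (X ω)).ne']
      · simp [hinddef, hvdef, h]
    have hindAE : AEMeasurable ind (P.restrict MB) := by
      rw [hindv]
      exact indfun_meas.comp_aemeasurable hvint.aemeasurable
    have hindbd : ∀ ω, 0 ≤ ind ω ∧ ind ω ≤ 1 := fun ω => by
      by_cases h : T ω = t <;> simp [hinddef, h]
    have hindint : Integrable ind (P.restrict MB) := by
      refine Integrable.mono' (integrable_const 1) hindAE.aestronglyMeasurable ?_
      refine Eventually.of_forall fun ω => ?_
      rw [Real.norm_eq_abs, abs_of_nonneg (hindbd ω).1]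
      exact (hindbd ω).2
    rcases eq_or_ne (∫ ω, ind ω ∂(P.restrict MB)) 0 with hα0 | hαne
    · -- A = {T = t} ∩ B is null‐like: ind vanishes a.e. on MB
      apply degenerate
      have hz : ind =ᵐ[P.restrict MB] 0 :=
        (integral_eq_zero_iff_of_nonneg_ae
          (Eventually.of_forall fun ω => (hindbd ω).1) hindint).mp hα0
      have hz' : ∀ᵐ ω ∂P, ω ∈ MB → ind ω = 0 := ae_imp_of_ae_restrict hz
      filter_upwards [hz'] with ω h
      by_cases hb : ω ∈ B
      · rw [h (hBsub hb)]; ring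
      · rw [hχ0 ω hb]; ring
    · have hαpos : 0 < ∫ ω, ind ω ∂(P.restrict MB) :=
        lt_of_le_of_ne (integral_nonneg fun ω => (hindbd ω).1) (Ne.symm hαne)
      -- second application of heh with ge²
      have hge2bd : ∀ x, |ge x * ge x| ≤ 1 := fun x => by
        rw [abs_mul]
        calc |ge x| * |ge x| ≤ 1 * 1 :=
          mul_le_mul (hgebd x) (hgebd x) (abs_nonneg _) zero_le_one
        _ = 1 := one_mul 1
      have h2 := heh (fun x => ge x * ge x) (hgem.mul hgem) hge2bd
      rw [hrB] at h2
      have hL2 : ∫ ω in MB, (fun x => ge x * ge x) (X ω) * (if T ω = t then 1 else 0) ∂P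
          = ∫ ω, v ω * v ω ∂(P.restrict MB) := by
        refine integral_congr_ae (Eventually.of_forall fun ω => ?_)
        by_cases h : T ω = t <;> simp [hvdef, h] <;> ring
      have hv2int : Integrable (fun ω => v ω * v ω) (P.restrict MB) := by
        refine Integrable.mono' (integrable_const 1)
          (hvint.aemeasurable.mul hvint.aemeasurable).aestronglyMeasurable ?_
        refine Eventually.of_forall fun ω => ?_
        have hv0 : 0 ≤ v ω := by
          rcases hindbd ω with ⟨ha, hb⟩
          have := (hgepos (X ω)).le
          simp only [hvdef, hinddef] at *
          positivity
        have hv1 : v ω ≤ 1 := by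
          rcases hindbd ω with ⟨ha, hb⟩
          have h1' := hgele (X ω)
          have h2' := (hgepos (X ω)).le
          simp only [hvdef, hinddef] at *
          nlinarith
        rw [Real.norm_eq_abs, abs_of_nonneg (by positivity)]
        nlinarith
      have hv2ge : (fun ω => ε ^ 2 * ind ω) ≤ᵐ[P.restrict MB] fun ω => v ω * v ω := by
        refine ae_restrict_of_ae ?_
        filter_upwards [hgee] with ω h
        rcases hindbd ω with ⟨ha, hb⟩
        have hge' := h.2
        by_cases ht' : T ω = t
        · simp only [hvdef, hinddef, ht', if_true, mul_one]
          nlinarith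
        · simp only [hvdef, hinddef, ht', if_false, mul_zero]
          nlinarith
      have hL2pos : 0 < ∫ ω, v ω * v ω ∂(P.restrict MB) := by
        have hmono := integral_mono_ae (hindint.const_mul (ε ^ 2)) hv2int hv2ge
        have : (0:ℝ) < ε ^ 2 * ∫ ω, ind ω ∂(P.restrict MB) := by positivity
        calc (0:ℝ) < ε ^ 2 * ∫ ω, ind ω ∂(P.restrict MB) := this
          _ = ∫ ω, ε ^ 2 * ind ω ∂(P.restrict MB) := (integral_const_mul _ _).symm
          _ ≤ _ := hmono
      rw [hL2] at h2
      set r : Ω → ℝ := fun ω => (fun x => ge x * ge x) (X ω) * e (X ω) with hrdef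
      have hrint : Integrable r (P.restrict MB) := by
        by_contra hni
        rw [integral_undef hni] at h2
        exact absurd h2 (ne_of_gt hL2pos)
      -- recover e ∘ X a.e.-measurably on MB
      have heXAE : AEMeasurable (fun ω => e (X ω)) (P.restrict MB) := by
        have hre : (fun ω => ε ^ 2 / r ω) =ᵐ[P.restrict MB] fun ω => e (X ω) := by
          refine ae_restrict_of_ae ?_
          filter_upwards [hgee, hbde] with ω h hb
          have hepos : 0 < e (X ω) := lt_of_lt_of_le hε hb.1
          have hr' : r ω = ε ^ 2 / e (X ω) := by
            have h1' := h.1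
            simp only [hrdef]
            field_simp
            nlinarith [h.1]
          rw [hr', div_div_eq_mul_div, mul_div_cancel_left₀ _ (by positivity : (ε:ℝ) ^ 2 ≠ 0)]
        exact (aemeasurable_const.div hrint.aemeasurable).congr hre
      -- A = {T = t} ∩ B is null measurable
      set A : Set Ω := {ω | T ω = t} ∩ B with hAdef
      set j : Ω → ℝ := fun ω => ind ω * χ ω with hjdef
      obtain ⟨ind', hind'm, hind'ae⟩ := hindAE
      have hPae : ∀ᵐ ω ∂P, ω ∈ MB → ind ω = ind' ω := ae_imp_of_ae_restrict hind'ae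
      have hjae : j =ᵐ[P] fun ω => (MB.indicator ind' ω) * χ ω := by
        filter_upwards [hPae] with ω h
        by_cases hmb : ω ∈ MB
        · simp only [hjdef, Set.indicator_of_mem hmb, h hmb]
        · have hb : ω ∉ B := fun hb => hmb (hBsub hb)
          simp only [hjdef, Set.indicator_of_notMem hmb, hχ0 ω hb, mul_zero, zero_mul]
      have hjAE : AEMeasurable j P :=
        (((hind'm.indicator hMBm).aemeasurable).mul hχAE).congr hjae.symm
      have hjA : ∀ ω, ω ∈ A ↔ j ω = 1 := by
        intro ω
        constructor
        · rintro ⟨hT, hB⟩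
          have hT' : T ω = t := hT
          simp [hjdef, hinddef, hT', hχ1 ω hB]
        · intro h
          by_cases hT : T ω = t
          · by_cases hB : ω ∈ B
            · exact ⟨hT, hB⟩
            · exfalso
              simp only [hjdef, hχ0 ω hB, mul_zero] at h
              exact one_ne_zero h.symm
          · exfalso
            simp only [hjdef, hinddef, hT, if_false, zero_mul] at h
            exact one_ne_zero h.symm
      have hAnm : NullMeasurableSet A P := by
        have : A = j ⁻¹' {1} := Set.ext fun ω => by
          simpa using hjA ω
        rw [this]
        exact hjAE.nullMeasurable (measurableSet_singleton 1)
      set MA := toMeasurable P A with hMAdef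
      have hMAm : MeasurableSet MA := measurableSet_toMeasurable P A
      have hMAae : MA =ᵐ[P] A := hAnm.toMeasurable_ae_eq
      have hrA : P.restrict A = P.restrict MA := (Measure.restrict_congr_set hMAae).symm
      have hAsub : A ⊆ MA := subset_toMeasurable P A
      -- transfer a.e.-measurability of e∘X from MB to MA
      have hMAMB : P (MA \ MB) = 0 := by
        have hsub : MA \ MB ⊆ MA \ A := by
          intro ω hω
          refine ⟨hω.1, fun hA' => hω.2 (hBsub hA'.2)⟩
        exact measure_mono_null hsub ((ae_eq_set.mp hMAae).1)
      have hrAB : P.restrict MA = P.restrict (MA ∩ MB) := by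
        refine Measure.restrict_congr_set ?_
        rw [ae_eq_set]
        constructor
        · have : MA \ (MA ∩ MB) ⊆ MA \ MB := by
            intro ω hω
            exact ⟨hω.1, fun h => hω.2 ⟨hω.1, h⟩⟩
          exact measure_mono_null this hMAMB
        · have : (MA ∩ MB) \ MA = ∅ := by
            ext ω; simp (config := {contextual := true}) [Set.mem_diff]
          rw [this]; simp
      have hle : P.restrict (MA ∩ MB) ≤ P.restrict MB :=
        Measure.restrict_mono Set.inter_subset_right le_rfl
      have heXMA : AEMeasurable (fun ω => e (X ω)) (P.restrict MA) := by
        rw [hrAB]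
        exact heXAE.mono_measure hle
      have hqXMA : AEMeasurable (fun ω => q (X ω)) (P.restrict MA) :=
        hqAE.mono_measure Measure.restrict_le_self
      -- the clamped weight G
      set G : ℝ → ℝ := fun x => ε ^ 2 / max (e x * q x) (ε ^ 2) with hGdef
      have hε2pos : (0:ℝ) < ε ^ 2 := by positivity
      have hGm : Measurable G := measurable_const.div ((hem.mul hqm).max measurable_const)
      have hGpos : ∀ x, 0 < G x := fun x =>
        div_pos hε2pos (lt_of_lt_of_le hε2pos (le_max_right _ _))
      have hGle : ∀ x, G x ≤ 1 := fun x => by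
        rw [hGdef]
        simp only []
        rw [div_le_one (lt_of_lt_of_le hε2pos (le_max_right _ _))]
        exact le_max_right _ _
      have hGbd : ∀ x, |G x| ≤ 1 := fun x => by
        rw [abs_of_pos (hGpos x)]; exact hGle x
      have hGfact : ∀ᵐ ω ∂P, ε ^ 2 ≤ e (X ω) * q (X ω) ∧
          G (X ω) = ε ^ 2 / (e (X ω) * q (X ω)) := by
        filter_upwards [hbde, hbdq] with ω he' hq'
        have h1' : ε ^ 2 ≤ e (X ω) * q (X ω) := by nlinarith [he'.1, hq'.1]
        refine ⟨h1', ?_⟩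
        rw [hGdef]
        simp only []
        rw [max_eq_left h1']
      have hGXAE : AEMeasurable (fun ω => G (X ω)) (P.restrict MA) := by
        have hcomp : Measurable (fun a : ℝ => ε ^ 2 / max a (ε ^ 2)) :=
          measurable_const.div (measurable_id.max measurable_const)
        exact hcomp.comp_aemeasurable (heXMA.mul hqXMA)
      -- apply the conditional mean hypothesis for μ
      have h3 := hμh G hGm hGbd
      rw [hrA] at h3
      have hYMA : AEStronglyMeasurable Y (P.restrict MA) := hYInt.1.restrict
      have hμMA : AEStronglyMeasurable (fun ω => μ (X ω)) (P.restrict MA) :=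
        hμInt.1.restrict
      have hGYint : Integrable (fun ω => G (X ω) * Y ω) (P.restrict MA) := by
        refine Integrable.mono' (hYInt.abs.restrict)
          (hGXAE.aestronglyMeasurable.mul hYMA) ?_
        refine Eventually.of_forall fun ω => ?_
        rw [Real.norm_eq_abs, abs_mul]
        calc |G (X ω)| * |Y ω| ≤ 1 * |Y ω| :=
          mul_le_mul_of_nonneg_right (hGbd _) (abs_nonneg _)
        _ = |Y ω| := one_mul _
      have hGμint : Integrable (fun ω => G (X ω) * μ (X ω)) (P.restrict MA) := by
        refine Integrable.mono' (hμInt.abs.restrict)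
          (hGXAE.aestronglyMeasurable.mul hμMA) ?_
        refine Eventually.of_forall fun ω => ?_
        rw [Real.norm_eq_abs, abs_mul]
        calc |G (X ω)| * |μ (X ω)| ≤ 1 * |μ (X ω)| :=
          mul_le_mul_of_nonneg_right (hGbd _) (abs_nonneg _)
        _ = |μ (X ω)| := one_mul _
      have h4 : ∫ ω in MA, G (X ω) * (Y ω - μ (X ω)) ∂P = 0 := by
        have heq : (fun ω => G (X ω) * (Y ω - μ (X ω)))
            = fun ω => G (X ω) * Y ω - G (X ω) * μ (X ω) := by
          funext ω; ring
        rw [heq, integral_sub hGYint hGμint, h3, sub_self]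
      -- the main a.e. identification of F
      set R : Ω → ℝ := fun ω =>
        (ε ^ 2)⁻¹ * (MA.indicator (fun ω => G (X ω) * (Y ω - μ (X ω))) ω) with hRdef
      have hmemae : ∀ᵐ ω ∂P, ω ∈ MA ↔ ω ∈ A := eventuallyEq_set.mp hMAae
      have hFae : F =ᵐ[P] R := by
        filter_upwards [hbde, hbdq, hGfact, hmemae] with ω he' hq' hG' hmem
        by_cases hA' : ω ∈ A
        · have hT : T ω = t := hA'.1
          have hB' : ω ∈ B := hA'.2
          have hMA' : ω ∈ MA := hmem.mpr hA'
          have hepos : 0 < e (X ω) := lt_of_lt_of_le hε he'.1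
          have hqpos : 0 < q (X ω) := lt_of_lt_of_le hε hq'.1
          have hne : e (X ω) * q (X ω) ≠ 0 := by positivity
          simp only [hFdef, hRdef, hT, if_true, hχ1 ω hB', mul_one, one_mul,
            Set.indicator_of_mem hMA', hG'.2]
          field_simp
        · have hMA' : ω ∉ MA := fun h => hA' (hmem.mp h)
          have hnum : (if T ω = t then (1:ℝ) else 0) * χ ω = 0 := by
            by_cases hT : T ω = t
            · have hB' : ω ∉ B := fun hb => hA' ⟨hT, hb⟩
              rw [hχ0 ω hB']; ring
            · simp [hT]
          simp only [hFdef, hRdef, hnum, Set.indicator_of_notMem hMA', mul_zero,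
            zero_div, zero_mul]
      have hRint : Integrable R P := by
        have hindAE' : AEMeasurable (MA.indicator (fun ω => G (X ω) * (Y ω - μ (X ω)))) P := by
          rw [aemeasurable_indicator_iff hMAm]
          exact hGXAE.mul ((hYInt.restrict.aemeasurable).sub (hμInt.restrict.aemeasurable))
        refine Integrable.mono' (((hYInt.abs.add hμInt.abs).const_mul (ε ^ 2)⁻¹))
          ((aemeasurable_const.mul hindAE').aestronglyMeasurable) ?_
        refine Eventually.of_forall fun ω => ?_
        rw [Real.norm_eq_abs, hRdef]
        simp only []
        rw [abs_mul, abs_of_nonneg (by positivity : (0:ℝ) ≤ (ε ^ 2)⁻¹)]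
        refine mul_le_mul_of_nonneg_left ?_ (by positivity)
        by_cases hMA' : ω ∈ MA
        · rw [Set.indicator_of_mem hMA', abs_mul]
          calc |G (X ω)| * |Y ω - μ (X ω)| ≤ 1 * |Y ω - μ (X ω)| :=
            mul_le_mul_of_nonneg_right (hGbd _) (abs_nonneg _)
          _ = |Y ω - μ (X ω)| := one_mul _
          _ ≤ |Y ω| + |μ (X ω)| := abs_sub _ _
        · rw [Set.indicator_of_notMem hMA']
          simp [abs_nonneg]
          positivity
      refine ⟨hRint.congr hFae.symm, ?_⟩
      rw [integral_congr_ae hFae, hRdef]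
      simp only []
      rw [integral_const_mul, integral_indicator hMAm, h4, mul_zero]

/-- the doubly robust score has mean
`E[φ(t)] = E_X[μ₀(X) − μ₁(X)] = θ(t)`. -/
theorem dr_score_unbiased_for_theta
    {Ω : Type*} [MeasurableSpace Ω] (P : Measure Ω) [IsProbabilityMeasure P]
    (Y T S X : Ω → ℝ) (t : ℝ) (ht : t = 0 ∨ t = 1)
    (hT : ∀ ω, T ω = 0 ∨ T ω = 1) (hS : ∀ ω, S ω = 0 ∨ S ω = 1)
    (hYInt : Integrable Y P)
    -- nuisance functions: conditional means and propensities
    (μ0 μ1 e0 e1 p : ℝ → ℝ)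
    (hμ0 : IsCondMeanOn P X ({ω | T ω = t} ∩ {ω | S ω = 0}) Y μ0)
    (hμ1 : IsCondMeanOn P X ({ω | T ω = t} ∩ {ω | S ω = 1}) Y μ1)
    (he0 : IsCondMeanOn P X {ω | S ω = 0} (fun ω => if T ω = t then 1 else 0) e0)
    (he1 : IsCondMeanOn P X {ω | S ω = 1} (fun ω => if T ω = t then 1 else 0) e1)
    (hp : IsCondMeanOn P X Set.univ (fun ω => if S ω = 1 then 1 else 0) p)
    -- overlap: all nuisance probabilities bounded away from 0 and 1
    (ε : ℝ) (hε : 0 < ε)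
    (hbdd : ∀ᵐ ω ∂P, ε ≤ e0 (X ω) ∧ e0 (X ω) ≤ 1 - ε ∧ ε ≤ e1 (X ω) ∧
      e1 (X ω) ≤ 1 - ε ∧ ε ≤ p (X ω) ∧ p (X ω) ≤ 1 - ε)
    -- the score φ(t)
    (φ : Ω → ℝ)
    (hφ : ∀ ω, φ ω = μ0 (X ω) - μ1 (X ω)
      + ((if T ω = t then 1 else 0) * (1 - S ω)) / (e0 (X ω) * (1 - p (X ω)))
        * (Y ω - μ0 (X ω))
      - ((if T ω = t then 1 else 0) * S ω) / (e1 (X ω) * p (X ω))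
        * (Y ω - μ1 (X ω)))
    (hφInt : Integrable φ P)
    (hμ0Int : Integrable (fun ω => μ0 (X ω)) P)
    (hμ1Int : Integrable (fun ω => μ1 (X ω)) P) :
    ∫ ω, φ ω ∂P = ∫ ω, (μ0 (X ω) - μ1 (X ω)) ∂P := by
  classical
  -- ε ≤ 1 - ε
  have hε2 : ε ≤ 1 - ε := by
    have hne : P ≠ 0 := IsProbabilityMeasure.ne_zero P
    have : ∃ ω, ε ≤ e0 (X ω) ∧ e0 (X ω) ≤ 1 - ε ∧ ε ≤ e1 (X ω) ∧
        e1 (X ω) ≤ 1 - ε ∧ ε ≤ p (X ω) ∧ p (X ω) ≤ 1 - ε := by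
      have : (MeasureTheory.ae P).NeBot := ae_neBot.mpr hne
      exact hbdd.exists
    obtain ⟨ω0, h1, h2, _⟩ := this
    linarith
  have hε1 : ε ≤ 1 := by linarith
  -- STEP A : the indicator of {S = 1} is a.e. measurable
  set χS : Ω → ℝ := fun ω => if S ω = 1 then (1:ℝ) else 0 with hχSdef
  set gp : ℝ → ℝ := fun x => ε / max (p x) ε with hgpdef
  have hgpm : Measurable gp := measurable_const.div (hp.1.max measurable_const)
  have hgppos : ∀ x, 0 < gp x := fun x =>
    div_pos hε (lt_of_lt_of_le hε (le_max_right _ _))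
  have hgple : ∀ x, gp x ≤ 1 := fun x => by
    rw [div_le_one (lt_of_lt_of_le hε (le_max_right _ _))]
    exact le_max_right _ _
  have hgpbd : ∀ x, |gp x| ≤ 1 := fun x => by
    rw [abs_of_pos (hgppos x)]; exact hgple x
  have hpbd : ∀ᵐ ω ∂P, ε ≤ p (X ω) ∧ p (X ω) ≤ 1 - ε := by
    filter_upwards [hbdd] with ω h
    exact ⟨h.2.2.2.2.1, h.2.2.2.2.2⟩
  have hgpp : ∀ᵐ ω ∂P, gp (X ω) * p (X ω) = ε ∧ gp (X ω) = ε / p (X ω) := by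
    filter_upwards [hpbd] with ω h
    have hppos : 0 < p (X ω) := lt_of_lt_of_le hε h.1
    have hmax : max (p (X ω)) ε = p (X ω) := max_eq_left h.1
    constructor
    · rw [hgpdef]; simp only []
      rw [hmax, div_mul_cancel₀ _ hppos.ne']
    · rw [hgpdef]; simp only []
      rw [hmax]
  have hA1 := hp.2 gp hgpm hgpbd
  rw [Measure.restrict_univ] at hA1
  have hRA : ∫ ω, gp (X ω) * p (X ω) ∂P = ε := by
    have hc : (fun ω => gp (X ω) * p (X ω)) =ᵐ[P] fun _ => ε :=
      hgpp.mono fun ω h => h.1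
    rw [integral_congr_ae hc]
    simp
  set u : Ω → ℝ := fun ω => gp (X ω) * (if S ω = 1 then 1 else 0) with hudef
  have hu : ∫ ω, u ω ∂P = ε := by rw [hudef]; rw [hA1, hRA]
  have huint : Integrable u P := by
    by_contra hni
    rw [integral_undef hni] at hu
    exact hε.ne hu
  have hχSu : χS = (fun r : ℝ => if r = 0 then (0:ℝ) else 1) ∘ u := by
    funext ω
    by_cases h : S ω = 1
    · simp [hχSdef, hudef, h, (hgppos (X ω)).ne']
    · simp [hχSdef, hudef, h]
  have hχSAE : AEMeasurable χS P := by
    rw [hχSu]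
    exact indfun_meas.comp_aemeasurable huint.aemeasurable
  have hχSbd : ∀ ω, 0 ≤ χS ω ∧ χS ω ≤ 1 := fun ω => by
    by_cases h : S ω = 1 <;> simp [hχSdef, h]
  have hχSint : Integrable χS P := by
    refine Integrable.mono' (integrable_const 1) hχSAE.aestronglyMeasurable ?_
    refine Eventually.of_forall fun ω => ?_
    rw [Real.norm_eq_abs, abs_of_nonneg (hχSbd ω).1]
    exact (hχSbd ω).2
  have hχSmean : ε ≤ ∫ ω, χS ω ∂P := by
    rw [← hu]
    refine integral_mono huint hχSint fun ω => ?_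
    by_cases h : S ω = 1
    · simp only [hudef, hχSdef, h, if_true, mul_one]
      exact hgple _
    · simp [hudef, hχSdef, h]
  -- STEP B : p ∘ X is a.e. measurable
  set gq : ℝ → ℝ := fun x => ε / max (1 - p x) ε with hgqdef
  have hgqm : Measurable gq :=
    measurable_const.div ((measurable_const.sub hp.1).max measurable_const)
  have hgqpos : ∀ x, 0 < gq x := fun x =>
    div_pos hε (lt_of_lt_of_le hε (le_max_right _ _))
  have hgqle : ∀ x, gq x ≤ 1 := fun x => by
    rw [div_le_one (lt_of_lt_of_le hε (le_max_right _ _))]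
    exact le_max_right _ _
  have hgqbd : ∀ x, |gq x| ≤ 1 := fun x => by
    rw [abs_of_pos (hgqpos x)]; exact hgqle x
  have hgqfact : ∀ᵐ ω ∂P, gq (X ω) = ε / (1 - p (X ω)) ∧ ε ≤ gq (X ω) := by
    filter_upwards [hpbd] with ω h
    have h1 : ε ≤ 1 - p (X ω) := by linarith [h.2]
    have hpos : 0 < 1 - p (X ω) := lt_of_lt_of_le hε h1
    have hmax : max (1 - p (X ω)) ε = 1 - p (X ω) := max_eq_left h1
    constructor
    · rw [hgqdef]; simp only []; rw [hmax]
    · rw [hgqdef]; simp only []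
      rw [hmax, le_div_iff₀ hpos]
      nlinarith [h.1]
  set w : Ω → ℝ := fun ω => gq (X ω) * χS ω with hwdef
  have hwAE : AEMeasurable w P := by
    have hcomp : Measurable (fun s : ℝ =>
        if s = 0 then (0:ℝ) else ε / max (1 - ε / s) ε) := by
      have hset : MeasurableSet {s : ℝ | s = 0} := by
        simpa using (measurableSet_singleton (0:ℝ))
      refine Measurable.ite hset measurable_const ?_
      exact measurable_const.div (((measurable_const.sub
        (measurable_const.div measurable_id)).max measurable_const))
    have hweq : w =ᵐ[P] (fun s : ℝ =>
        if s = 0 then (0:ℝ) else ε / max (1 - ε / s) ε) ∘ u := by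
      filter_upwards [hpbd, hgpp] with ω h hg
      have hppos : 0 < p (X ω) := lt_of_lt_of_le hε h.1
      by_cases hs : S ω = 1
      · have hu1 : u ω = ε / p (X ω) := by
          simp only [hudef, hs, if_true, mul_one]
          exact hg.2
        have hune : u ω ≠ 0 := by
          rw [hu1]; positivity
        have hinv : ε / u ω = p (X ω) := by
          rw [hu1]
          field_simp
        simp only [hwdef, hχSdef, hs, if_true, mul_one, Function.comp_apply, hune,
          if_false, hinv, hgqdef]
      · have hu0 : u ω = 0 := by simp [hudef, hs]
        simp [hwdef, hχSdef, hs, Function.comp_apply, hu0]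
    exact (hcomp.comp_aemeasurable huint.aemeasurable).congr hweq.symm
  have hwint : Integrable w P := by
    refine Integrable.mono' (integrable_const 1) hwAE.aestronglyMeasurable ?_
    refine Eventually.of_forall fun ω => ?_
    rw [Real.norm_eq_abs, hwdef]
    simp only []
    rw [abs_mul, abs_of_pos (hgqpos _), abs_of_nonneg (hχSbd ω).1]
    calc gq (X ω) * χS ω ≤ 1 * 1 :=
      mul_le_mul (hgqle _) (hχSbd ω).2 (hχSbd ω).1 zero_le_one
    _ = 1 := one_mul 1
  have hwpos : 0 < ∫ ω, w ω ∂P := by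
    have hge : (fun ω => ε * χS ω) ≤ᵐ[P] w := by
      filter_upwards [hgqfact] with ω h
      simp only [hwdef]
      exact mul_le_mul_of_nonneg_right h.2 (hχSbd ω).1
    have := integral_mono_ae (hχSint.const_mul ε) hwint hge
    rw [integral_const_mul] at this
    nlinarith
  have hB1 := hp.2 gq hgqm hgqbd
  rw [Measure.restrict_univ] at hB1
  have hrint : Integrable (fun ω => gq (X ω) * p (X ω)) P := by
    by_contra hni
    rw [integral_undef hni] at hB1
    have : ∫ ω, gq (X ω) * χS ω ∂P = ∫ ω, w ω ∂P := rfl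
    rw [this] at hB1
    exact absurd hB1 (ne_of_gt hwpos)
  have hpXAE : AEMeasurable (fun ω => p (X ω)) P := by
    set rp : Ω → ℝ := fun ω => gq (X ω) * p (X ω) with hrpdef
    have hrec : (fun ω => rp ω / (ε + rp ω)) =ᵐ[P] fun ω => p (X ω) := by
      filter_upwards [hpbd, hgqfact] with ω h hg
      have h1 : ε ≤ 1 - p (X ω) := by linarith [h.2]
      have hpos : 0 < 1 - p (X ω) := lt_of_lt_of_le hε h1
      have hppos : 0 < p (X ω) := lt_of_lt_of_le hε h.1
      have hrp : rp ω = ε * p (X ω) / (1 - p (X ω)) := by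
        simp only [hrpdef]
        rw [hg.1]
        ring
      rw [hrp]
      have hden : ε + ε * p (X ω) / (1 - p (X ω)) = ε / (1 - p (X ω)) := by
        field_simp
        ring
      rw [hden]
      field_simp
    exact ((hrint.aemeasurable).div (aemeasurable_const.add hrint.aemeasurable)).congr hrec
  -- a.e. measurability of S (as a function) and 1 - S
  have hSfun : S = χS := by
    funext ω
    rcases hS ω with h | h
    · simp [hχSdef, h]
    · simp [hχSdef, h]
  have hSAE : AEMeasurable S P := by rw [hSfun]; exact hχSAE
  -- apply the core lemma to both correction terms
  have key0 := piece P Y T X t {ω | S ω = 0} (fun ω => 1 - S ω) μ0 e0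
    (fun x => 1 - p x) he0.1 (measurable_const.sub hp.1) ε hε hε2 hYInt hμ0Int
    (aemeasurable_const.sub hSAE)
    (fun ω h => by
      have h' : S ω = 0 := h
      show 1 - S ω = 1
      rw [h']; ring)
    (fun ω h => by
      have h' : S ω = 1 := by
        rcases hS ω with h0 | h1
        · exact absurd h0 h
        · exact h1
      show 1 - S ω = 0
      rw [h']; ring)
    (aemeasurable_const.sub hpXAE)
    (by filter_upwards [hbdd] with ω h; exact ⟨h.1, h.2.1⟩)
    (by filter_upwards [hpbd] with ω h; constructor <;> [linarith [h.2]; linarith [h.1]])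
    hμ0.2 he0.2
  have key1 := piece P Y T X t {ω | S ω = 1} S μ1 e1 p he1.1 hp.1 ε hε hε2 hYInt hμ1Int
    hSAE
    (fun ω h => h)
    (fun ω h => by
      rcases hS ω with h0 | h1
      · exact h0
      · exact absurd h1 h)
    hpXAE
    (by filter_upwards [hbdd] with ω h; exact ⟨h.2.2.1, h.2.2.2.1⟩)
    (by filter_upwards [hpbd] with ω h; constructor <;> [exact h.1; linarith [h.2]])
    hμ1.2 he1.2
  obtain ⟨hF0int, hF0zero⟩ := key0
  obtain ⟨hF1int, hF1zero⟩ := key1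
  -- assemble
  have hbase : Integrable (fun ω => μ0 (X ω) - μ1 (X ω)) P := hμ0Int.sub hμ1Int
  have hφae : φ =ᵐ[P] fun ω => (μ0 (X ω) - μ1 (X ω))
      + ((if T ω = t then (1:ℝ) else 0) * (1 - S ω)) / (e0 (X ω) * (1 - p (X ω)))
        * (Y ω - μ0 (X ω))
      - ((if T ω = t then (1:ℝ) else 0) * S ω) / (e1 (X ω) * p (X ω))
        * (Y ω - μ1 (X ω)) := Eventually.of_forall hφ
  have hF0int' : Integrable (fun ω => ((if T ω = t then (1:ℝ) else 0) * (1 - S ω))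
      / (e0 (X ω) * (1 - p (X ω))) * (Y ω - μ0 (X ω))) P := hF0int
  have hF1int' : Integrable (fun ω => ((if T ω = t then (1:ℝ) else 0) * S ω)
      / (e1 (X ω) * p (X ω)) * (Y ω - μ1 (X ω))) P := hF1int
  rw [integral_congr_ae hφae]
  have hsum : Integrable (fun ω => (μ0 (X ω) - μ1 (X ω))
      + ((if T ω = t then (1:ℝ) else 0) * (1 - S ω)) / (e0 (X ω) * (1 - p (X ω)))
        * (Y ω - μ0 (X ω))) P := by
    exact hbase.add hF0int'
  rw [integral_sub hsum hF1int', integral_add hbase hF0int']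
  have hz0 : ∫ ω, ((if T ω = t then (1:ℝ) else 0) * (1 - S ω))
      / (e0 (X ω) * (1 - p (X ω))) * (Y ω - μ0 (X ω)) ∂P = 0 := hF0zero
  have hz1 : ∫ ω, ((if T ω = t then (1:ℝ) else 0) * S ω)
      / (e1 (X ω) * p (X ω)) * (Y ω - μ1 (X ω)) ∂P = 0 := hF1zero
  rw [hz0, hz1]
  ring
end

section
/- With Λ = μ₀(X) + [ST/(γ₀(X)β₀(X))](Y − μ₀(X)) where μ₀(X) = E[Y | X, T=1, S=0], the identity E[Λ] = E_X[E[Y | X, T=1, S=1]] holds whenever internal validity and external validity are assumed (even without conditional ignorability). -/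
open MeasureTheory ProbabilityTheory

/-- under internal and external validity (no conditional ignorability needed),
`E[Λ] = E_X[E[Y ∣ X, T=1, S=1]]`. -/
theorem dr_score_matches_experimental_mean
    {Ω : Type*} [MeasurableSpace Ω] [StandardBorelSpace Ω] [Nonempty Ω]
    (P : Measure Ω) [IsProbabilityMeasure P]
    (Y0 Y1 Y T S X : Ω → ℝ)
    (hX : Measurable X) (hT : ∀ ω, T ω = 0 ∨ T ω = 1) (hS : ∀ ω, S ω = 0 ∨ S ω = 1)
    -- consistency
    (hcons : ∀ ω, Y ω = if T ω = 1 then Y1 ω else Y0 ω)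
    (hY0Int : Integrable Y0 P) (hY1Int : Integrable Y1 P)
    -- nuisance functions
    (μ0 β0 γ0 : ℝ → ℝ)
    (hμ0 : IsCondMeanOn P X ({ω | T ω = 1} ∩ {ω | S ω = 0}) Y μ0)
    (hβ0 : IsCondMeanOn P X {ω | S ω = 1} (fun ω => if T ω = 1 then 1 else 0) β0)
    (hγ0 : IsCondMeanOn P X Set.univ (fun ω => if S ω = 1 then 1 else 0) γ0)
    -- overlap
    (ε : ℝ) (hε : 0 < ε)
    (hbdd : ∀ᵐ ω ∂P, ε ≤ β0 (X ω) ∧ β0 (X ω) ≤ 1 - ε ∧ ε ≤ γ0 (X ω) ∧ γ0 (X ω) ≤ 1 - ε)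
    [IsFiniteMeasure (P[|{ω | S ω = 1}])]
    -- A2 internal validity
    (hA2 : CondIndepFun (MeasurableSpace.comap X inferInstance) hX.comap_le
      (fun ω => (Y0 ω, Y1 ω)) T (P[|{ω | S ω = 1}]))
    -- A3 external validity
    (hA3 : CondIndepFun (MeasurableSpace.comap X inferInstance) hX.comap_le
      (fun ω => (Y0 ω, Y1 ω)) S P)
    -- μExp = E[Y ∣ X, T=1, S=1]
    (μExp : ℝ → ℝ)
    (hμExp : IsCondMeanOn P X ({ω | T ω = 1} ∩ {ω | S ω = 1}) Y μExp)
    (hμExpInt : Integrable (fun ω => μExp (X ω)) P)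
    -- the score Λ
    (Λ : Ω → ℝ)
    (hΛ : ∀ ω, Λ ω = μ0 (X ω)
      + (S ω * T ω) / (γ0 (X ω) * β0 (X ω)) * (Y ω - μ0 (X ω)))
    (hΛInt : Integrable Λ P) :
    ∫ ω, Λ ω ∂P = ∫ ω, μExp (X ω) ∂P := by
  classical
  obtain ⟨hμ0m, -⟩ := hμ0
  obtain ⟨hβ0m, hβ0e⟩ := hβ0
  obtain ⟨hγ0m, hγ0e⟩ := hγ0
  obtain ⟨hμEm, hμEe⟩ := hμExp
  set B : Set Ω := {ω | S ω = 1} with hBdef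
  set A : Set Ω := {ω | T ω = 1} ∩ {ω | S ω = 1} with hAdef
  -- ε is at most 1/2
  have hε2 : ε ≤ 1 - ε := by
    haveI : (ae P).NeBot := ae_neBot.2 (IsProbabilityMeasure.ne_zero P)
    obtain ⟨ω, h1, h2, -, -⟩ := hbdd.exists
    linarith
  have hε1 : ε < 1 := by linarith
  -- clamped nuisances
  set β' : ℝ → ℝ := fun x => min (max (β0 x) ε) (1 - ε) with hβ'def
  set γ' : ℝ → ℝ := fun x => min (max (γ0 x) ε) (1 - ε) with hγ'def
  set f' : ℝ → ℝ := fun x => (γ' x * β' x)⁻¹ with hf'def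
  have hβ'm : Measurable β' := (hβ0m.max measurable_const).min measurable_const
  have hγ'm : Measurable γ' := (hγ0m.max measurable_const).min measurable_const
  have hf'm : Measurable f' := (hγ'm.mul hβ'm).inv
  have hβ'lb : ∀ x, ε ≤ β' x := fun x => le_min (le_max_right _ _) hε2
  have hγ'lb : ∀ x, ε ≤ γ' x := fun x => le_min (le_max_right _ _) hε2
  have hβ'ub : ∀ x, β' x ≤ 1 - ε := fun x => min_le_right _ _
  have hγ'ub : ∀ x, γ' x ≤ 1 - ε := fun x => min_le_right _ _
  have hprodpos : ∀ x, 0 < γ' x * β' x :=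
    fun x => mul_pos (lt_of_lt_of_le hε (hγ'lb x)) (lt_of_lt_of_le hε (hβ'lb x))
  have hprodlb : ∀ x, ε * ε ≤ γ' x * β' x :=
    fun x => mul_le_mul (hγ'lb x) (hβ'lb x) hε.le (le_trans hε.le (hγ'lb x))
  have hprodub : ∀ x, γ' x * β' x ≤ (1 - ε) * (1 - ε) := fun x =>
    mul_le_mul (hγ'ub x) (hβ'ub x) (le_trans hε.le (hβ'lb x)) (by linarith)
  have hf'pos : ∀ x, 0 < f' x := fun x => inv_pos.2 (hprodpos x)
  have hf'ub : ∀ x, f' x ≤ (ε * ε)⁻¹ :=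
    fun x => inv_anti₀ (mul_pos hε hε) (hprodlb x)
  have hone : (1 - ε) * (1 - ε) < 1 := by nlinarith
  have hf'lb : ∀ x, ((1 - ε) * (1 - ε))⁻¹ ≤ f' x :=
    fun x => inv_anti₀ (hprodpos x) (hprodub x)
  have hc1 : 1 < ((1 - ε) * (1 - ε))⁻¹ := (one_lt_inv₀ (by nlinarith)).2 hone
  have hf'gt1 : ∀ x, 1 < f' x := fun x => lt_of_lt_of_le hc1 (hf'lb x)
  -- a.e. the clamps do nothing
  have hclamp : ∀ᵐ ω ∂P, β' (X ω) = β0 (X ω) ∧ γ' (X ω) = γ0 (X ω) ∧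
      f' (X ω) = (γ0 (X ω) * β0 (X ω))⁻¹ := by
    filter_upwards [hbdd] with ω h
    have hb : β' (X ω) = β0 (X ω) := by
      simp only [hβ'def]; rw [max_eq_left h.1, min_eq_left h.2.1]
    have hg : γ' (X ω) = γ0 (X ω) := by
      simp only [hγ'def]; rw [max_eq_left h.2.2.1, min_eq_left h.2.2.2]
    exact ⟨hb, hg, by simp only [hf'def]; rw [hb, hg]⟩
  -- indicator of S is a.e. measurable (junk-value argument), yielding a measurable version of B
  have hγXint : Integrable (fun ω => γ0 (X ω)) P := by
    refine Integrable.mono' (integrable_const 1) ((hγ0m.comp hX).aestronglyMeasurable) ?_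
    filter_upwards [hbdd] with ω h
    rw [Real.norm_eq_abs]
    exact abs_le.2 ⟨by linarith [h.2.2.1], by linarith [h.2.2.2]⟩
  have hγlow : ε ≤ ∫ ω, γ0 (X ω) ∂P := by
    have h := integral_mono_ae (integrable_const ε) hγXint (hbdd.mono fun ω h => h.2.2.1)
    simpa using h
  have hγeq : ∫ ω, (if S ω = 1 then (1:ℝ) else 0) ∂P = ∫ ω, γ0 (X ω) ∂P := by
    have h := hγ0e (fun _ => 1) measurable_const (by norm_num)
    simpa using h
  have hindSint : Integrable (fun ω => if S ω = 1 then (1:ℝ) else 0) P := by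
    by_contra hc
    rw [integral_undef hc] at hγeq
    linarith
  obtain ⟨mS, hmS, hmSeq⟩ := hindSint.aestronglyMeasurable
  set Bt : Set Ω := mS ⁻¹' {1} with hBtdef
  have hBtmeas : MeasurableSet Bt := hmS.measurable (measurableSet_singleton 1)
  have hBBt : B =ᵐ[P] Bt := by
    rw [Filter.eventuallyEq_set]
    filter_upwards [hmSeq] with ω h
    rcases hS ω with h0 | h1
    · have : S ω ≠ 1 := by rw [h0]; norm_num
      simp only [hBdef, Set.mem_setOf_eq, hBtdef, Set.mem_preimage, Set.mem_singleton_iff]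
      rw [if_neg this] at h
      constructor
      · intro hc; exact absurd hc this
      · intro hc; rw [← h] at hc; norm_num at hc
    · simp only [hBdef, Set.mem_setOf_eq, hBtdef, Set.mem_preimage, Set.mem_singleton_iff]
      rw [if_pos h1] at h
      exact ⟨fun _ => h.symm, fun _ => h1⟩
  have hindSBt : ∀ᵐ ω ∂P, (if S ω = 1 then (1:ℝ) else 0) = (if ω ∈ Bt then (1:ℝ) else 0) := by
    have h := (Filter.eventuallyEq_set.1 hBBt)
    filter_upwards [h] with ω hiff
    by_cases hω : S ω = 1
    · rw [if_pos hω, if_pos (hiff.1 hω)]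
    · have : ω ∉ Bt := fun hc => hω (hiff.2 hc)
      rw [if_neg hω, if_neg this]
  have hPBt : 0 < (P Bt).toReal := by
    have h1 : ∫ ω, (if S ω = 1 then (1:ℝ) else 0) ∂P = (P Bt).toReal := by
      rw [integral_congr_ae hindSBt]
      have : (fun ω => if ω ∈ Bt then (1:ℝ) else 0) = Bt.indicator (fun _ => (1:ℝ)) := by
        ext ω; by_cases hω : ω ∈ Bt <;> simp [Set.indicator, hω]
      rw [this, integral_indicator_const (1:ℝ) hBtmeas]
      simp [measureReal_def]
    rw [h1] at hγeq
    linarith [hγeq, hγlow]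
  set ρ : Measure Ω := P.restrict Bt with hρdef
  have hρP : P.restrict B = ρ := Measure.restrict_congr_set hBBt
  haveI : IsFiniteMeasure ρ := by
    rw [hρdef]; infer_instance
  -- indicator of T is a.e. measurable w.r.t. ρ, yielding a measurable version of A
  have hbddρ : ∀ᵐ ω ∂ρ, ε ≤ β0 (X ω) ∧ β0 (X ω) ≤ 1 - ε ∧ ε ≤ γ0 (X ω) ∧ γ0 (X ω) ≤ 1 - ε := by
    rw [hρdef]; exact ae_restrict_of_ae hbdd
  have hβXintρ : Integrable (fun ω => β0 (X ω)) ρ := by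
    refine Integrable.mono' (integrable_const 1) ((hβ0m.comp hX).aestronglyMeasurable) ?_
    filter_upwards [hbddρ] with ω h
    rw [Real.norm_eq_abs]
    exact abs_le.2 ⟨by linarith [h.1], by linarith [h.2.1]⟩
  have hβlow : ε * (P Bt).toReal ≤ ∫ ω, β0 (X ω) ∂ρ := by
    have h := integral_mono_ae (integrable_const ε) hβXintρ (hbddρ.mono fun ω h => h.1)
    have h2 : ∫ _ω, ε ∂ρ = ε * (P Bt).toReal := by
      rw [integral_const]
      rw [hρdef, measureReal_def, Measure.restrict_apply_univ]
      rw [smul_eq_mul, mul_comm]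
    linarith [h, h2.symm.le]
  have hβeq : ∫ ω, (if T ω = 1 then (1:ℝ) else 0) ∂ρ = ∫ ω, β0 (X ω) ∂ρ := by
    have h := hβ0e (fun _ => 1) measurable_const (by norm_num)
    rw [hρP] at h
    simpa using h
  have hindTint : Integrable (fun ω => if T ω = 1 then (1:ℝ) else 0) ρ := by
    by_contra hc
    rw [integral_undef hc] at hβeq
    nlinarith [mul_pos hε hPBt]
  obtain ⟨mT, hmT, hmTeq⟩ := hindTint.aestronglyMeasurable
  set M : Set Ω := mT ⁻¹' {1} with hMdef
  have hMmeas : MeasurableSet M := hmT.measurable (measurableSet_singleton 1)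
  have hTM : {ω | T ω = 1} =ᵐ[ρ] M := by
    rw [Filter.eventuallyEq_set]
    filter_upwards [hmTeq] with ω h
    rcases hT ω with h0 | h1
    · have hne : T ω ≠ 1 := by rw [h0]; norm_num
      simp only [Set.mem_setOf_eq, hMdef, Set.mem_preimage, Set.mem_singleton_iff]
      rw [if_neg hne] at h
      exact ⟨fun hc => absurd hc hne, fun hc => by rw [← h] at hc; norm_num at hc⟩
    · simp only [Set.mem_setOf_eq, hMdef, Set.mem_preimage, Set.mem_singleton_iff]
      rw [if_pos h1] at h
      exact ⟨fun _ => h.symm, fun _ => h1⟩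
  have hindTM : ∀ᵐ ω ∂ρ, (if T ω = 1 then (1:ℝ) else 0) = (if ω ∈ M then (1:ℝ) else 0) := by
    filter_upwards [Filter.eventuallyEq_set.1 hTM] with ω hiff
    by_cases hω : T ω = 1
    · rw [if_pos hω, if_pos (hiff.1 hω)]
    · rw [if_neg hω, if_neg (fun hc => hω (hiff.2 hc))]
  set At : Set Ω := M ∩ Bt with hAtdef
  have hAtmeas : MeasurableSet At := hMmeas.inter hBtmeas
  -- A and At agree almost everywhere (w.r.t. P)
  have hAAt : ∀ᵐ ω ∂P, ω ∈ A ↔ ω ∈ At := by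
    have hDnull : P ({ω | ¬ (T ω = 1 ↔ ω ∈ M)} ∩ Bt) = 0 := by
      have h1 : ρ {ω | ¬ (T ω = 1 ↔ ω ∈ M)} = 0 := by
        have := Filter.eventuallyEq_set.1 hTM
        rw [ae_iff] at this
        exact this
      rw [hρdef, Measure.restrict_apply' hBtmeas] at h1
      exact h1
    have hD'null : P {ω | ¬ (ω ∈ B ↔ ω ∈ Bt)} = 0 := by
      have := Filter.eventuallyEq_set.1 hBBt
      rw [ae_iff] at this
      exact this
    rw [ae_iff]
    refine measure_mono_null ?_ (measure_union_null hDnull hD'null)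
    intro ω hω
    simp only [Set.mem_setOf_eq] at hω
    by_cases hB : ω ∈ B ↔ ω ∈ Bt
    · left
      simp only [Set.mem_inter_iff, Set.mem_setOf_eq]
      by_cases hA : ω ∈ A
      · obtain ⟨hT1, hS1⟩ := hA
        have hS1' : ω ∈ B := hS1
        have hBt1 : ω ∈ Bt := hB.1 hS1'
        have hM1 : ω ∉ M := by
          intro hM1
          exact hω ⟨fun _ => ⟨hM1, hBt1⟩, fun _ => ⟨hT1, hS1⟩⟩
        exact ⟨fun hc => hM1 (hc.1 hT1), hBt1⟩
      · have hAt1 : ω ∈ At := by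
          by_contra hc
          exact hω ⟨fun h => absurd h hA, fun h => absurd h hc⟩
        obtain ⟨hM1, hBt1⟩ := hAt1
        have hS1 : ω ∈ B := hB.2 hBt1
        have hT1 : T ω ≠ 1 := fun hc => hA ⟨hc, hS1⟩
        exact ⟨fun hc => hT1 (hc.2 hM1), hBt1⟩
    · right; exact hB
  set ν : Measure Ω := P.restrict At with hνdef
  have hνA : P.restrict A = ν := Measure.restrict_congr_set (Filter.eventuallyEq_set.2 hAAt)
  have hνmemA : ∀ᵐ ω ∂ν, ω ∈ A := by
    have h1 : ∀ᵐ ω ∂ν, ω ∈ At := by rw [hνdef]; exact ae_restrict_mem hAtmeas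
    have h2 : ∀ᵐ ω ∂ν, (ω ∈ A ↔ ω ∈ At) := by rw [hνdef]; exact ae_restrict_of_ae hAAt
    filter_upwards [h1, h2] with ω ha hb
    exact hb.2 ha
  -- KEY LEMMA: integrating a bounded function of X over A equals weighting by β0(X)γ0(X)
  have keyL : ∀ k : ℝ → ℝ, Measurable k → (∀ x, |k x| ≤ 1) →
      ∫ ω, k (X ω) ∂ν = ∫ ω, k (X ω) * (β0 (X ω) * γ0 (X ω)) ∂P := by
    intro k hk hkb
    have h1 : ∫ ω, k (X ω) ∂ν = ∫ ω, k (X ω) * (if T ω = 1 then (1:ℝ) else 0) ∂ρ := by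
      have e1 : ν = ρ.restrict M := by
        rw [hνdef, hρdef, Measure.restrict_restrict hMmeas]
      rw [e1, ← integral_indicator hMmeas]
      refine integral_congr_ae ?_
      filter_upwards [hindTM] with ω h
      by_cases hω : ω ∈ M
      · rw [Set.indicator_of_mem hω, h, if_pos hω, mul_one]
      · rw [Set.indicator_of_notMem hω, h, if_neg hω, mul_zero]
    have h2 := hβ0e k hk hkb
    rw [hρP] at h2
    have h3 : ∫ ω, k (X ω) * β0 (X ω) ∂ρ
        = ∫ ω, (k (X ω) * β' (X ω)) * (if S ω = 1 then (1:ℝ) else 0) ∂P := by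
      rw [hρdef, ← integral_indicator hBtmeas]
      refine integral_congr_ae ?_
      filter_upwards [hindSBt, hclamp] with ω h hcl
      by_cases hω : ω ∈ Bt
      · rw [Set.indicator_of_mem hω, h, if_pos hω, mul_one, hcl.1]
      · rw [Set.indicator_of_notMem hω, h, if_neg hω, mul_zero]
    have hbnd : ∀ x, |k x * β' x| ≤ 1 := by
      intro x
      rw [abs_mul]
      have h1' : |β' x| ≤ 1 := abs_le.2 ⟨by linarith [hβ'lb x], by linarith [hβ'ub x]⟩
      calc |k x| * |β' x| ≤ 1 * 1 := by
            exact mul_le_mul (hkb x) h1' (abs_nonneg _) (by norm_num)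
        _ = 1 := by norm_num
    have h4 := hγ0e (fun x => k x * β' x) (hk.mul hβ'm) hbnd
    simp only [Measure.restrict_univ] at h4
    have h5 : ∫ ω, (k (X ω) * β' (X ω)) * γ0 (X ω) ∂P
        = ∫ ω, k (X ω) * (β0 (X ω) * γ0 (X ω)) ∂P := by
      refine integral_congr_ae ?_
      filter_upwards [hclamp] with ω h
      rw [h.1]; ring
    rw [h1, h2, h3, ← h5]
    rw [← h4]
  -- Integrability of μ0 ∘ X
  set u : Ω → ℝ := fun ω => ((1 - f' (X ω))⁻¹) * (Λ ω - f' (X ω) * Y1 ω) with hudef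
  have hf'Xaesm : AEStronglyMeasurable (fun ω => f' (X ω)) P :=
    (hf'm.comp hX).aestronglyMeasurable
  have hf'Y1int : Integrable (fun ω => f' (X ω) * Y1 ω) P := by
    refine Integrable.bdd_mul (c := (ε * ε)⁻¹) hY1Int hf'Xaesm ?_
    refine Filter.Eventually.of_forall fun ω => ?_
    rw [Real.norm_eq_abs, abs_of_pos (hf'pos _)]
    exact hf'ub _
  have huint : Integrable u P := by
    refine Integrable.bdd_mul (c := (((1 - ε) * (1 - ε))⁻¹ - 1)⁻¹)
      (hΛInt.sub hf'Y1int) ((measurable_const.sub (hf'm.comp hX)).inv).aestronglyMeasurable ?_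
    refine Filter.Eventually.of_forall fun ω => ?_
    rw [Real.norm_eq_abs, abs_inv]
    have hgap : ((1 - ε) * (1 - ε))⁻¹ - 1 ≤ |1 - f' (X ω)| := by
      rw [abs_of_neg (by linarith [hf'gt1 (X ω)] : (1:ℝ) - f' (X ω) < 0)]
      linarith [hf'lb (X ω)]
    exact inv_anti₀ (by linarith [hc1]) hgap
  have hRint : Integrable (fun ω => At.indicator u ω + Atᶜ.indicator Λ ω) P :=
    (huint.indicator hAtmeas).add (hΛInt.indicator hAtmeas.compl)
  have hIR : (fun ω => μ0 (X ω)) =ᵐ[P] fun ω => At.indicator u ω + Atᶜ.indicator Λ ω := by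
    filter_upwards [hclamp, hAAt, hbdd] with ω hcl hiff hb
    by_cases hω : ω ∈ At
    · have hωc : ω ∉ Atᶜ := fun hc => hc hω
      rw [Set.indicator_of_mem hω, Set.indicator_of_notMem hωc, add_zero]
      obtain ⟨hT1, hS1⟩ := hiff.2 hω
      have hT1' : T ω = 1 := hT1
      have hS1' : S ω = 1 := hS1
      have hY : Y ω = Y1 ω := by rw [hcons ω, if_pos hT1']
      have hd := hf'gt1 (X ω)
      have hne : (1:ℝ) - f' (X ω) ≠ 0 := ne_of_lt (by linarith)
      simp only [hudef]
      rw [hΛ ω, hS1', hT1', hY, one_mul, one_div, ← hcl.2.2]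
      field_simp
      ring
    · have hωc : ω ∈ Atᶜ := hω
      rw [Set.indicator_of_notMem hω, Set.indicator_of_mem hωc, zero_add]
      have hA : ω ∉ A := fun h => hω (hiff.1 h)
      have hst : S ω * T ω = 0 := by
        rcases hT ω with h0 | h1
        · rw [h0, mul_zero]
        · rcases hS ω with hs0 | hs1
          · rw [hs0, zero_mul]
          · exact absurd (Set.mem_inter h1 hs1) hA
      rw [hΛ ω, hst, zero_div, zero_mul, add_zero]
  have hIint : Integrable (fun ω => μ0 (X ω)) P := hRint.congr hIR.symm
  -- the centered target function
  set hh : ℝ → ℝ := fun x => μExp x - μ0 x with hhdef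
  have hhm : Measurable hh := hμEm.sub hμ0m
  have hhXint : Integrable (fun ω => hh (X ω)) P := hμExpInt.sub hIint
  -- the correction term D
  set D : Ω → ℝ := fun ω => Λ ω - μ0 (X ω) with hDdef
  have hDint : Integrable D P := hΛInt.sub hIint
  -- ∫ D dP = ∫ D dν
  have hDP : ∫ ω, D ω ∂P = ∫ ω, D ω ∂ν := by
    have hDind : D =ᵐ[P] At.indicator D := by
      filter_upwards [hAAt] with ω hiff
      by_cases hω : ω ∈ At
      · rw [Set.indicator_of_mem hω]
      · rw [Set.indicator_of_notMem hω]
        have hA : ω ∉ A := fun h => hω (hiff.1 h)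
        have hst : S ω * T ω = 0 := by
          rcases hT ω with h0 | h1
          · rw [h0, mul_zero]
          · rcases hS ω with hs0 | hs1
            · rw [hs0, zero_mul]
            · exact absurd (Set.mem_inter h1 hs1) hA
        show Λ ω - μ0 (X ω) = 0
        rw [hΛ ω, hst, zero_div, zero_mul, add_zero, sub_self]
    rw [integral_congr_ae hDind, integral_indicator hAtmeas, hνdef]
  -- under ν, D equals f'(X)(Y1 - μ0(X))
  have hclampν : ∀ᵐ ω ∂ν, β' (X ω) = β0 (X ω) ∧ γ' (X ω) = γ0 (X ω) ∧
      f' (X ω) = (γ0 (X ω) * β0 (X ω))⁻¹ := by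
    rw [hνdef]; exact ae_restrict_of_ae hclamp
  have hDq : D =ᵐ[ν] fun ω => f' (X ω) * (Y1 ω - μ0 (X ω)) := by
    filter_upwards [hνmemA, hclampν] with ω hA hcl
    have hT1 : T ω = 1 := hA.1
    have hS1 : S ω = 1 := hA.2
    have hY : Y ω = Y1 ω := by rw [hcons ω, if_pos hT1]
    show Λ ω - μ0 (X ω) = f' (X ω) * (Y1 ω - μ0 (X ω))
    rw [hΛ ω, hS1, hT1, hY, one_mul, one_div, ← hcl.2.2]
    ring
  -- integrability under ν
  have hf'norm : ∀ ω, ‖f' (X ω)‖ ≤ (ε * ε)⁻¹ := fun ω => by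
    rw [Real.norm_eq_abs, abs_of_pos (hf'pos _)]; exact hf'ub _
  have hf'Xaesmν : AEStronglyMeasurable (fun ω => f' (X ω)) ν :=
    (hf'm.comp hX).aestronglyMeasurable
  have hY1ν : Integrable Y1 ν := by rw [hνdef]; exact hY1Int.restrict
  have hIν : Integrable (fun ω => μ0 (X ω)) ν := by rw [hνdef]; exact hIint.restrict
  have hμEν : Integrable (fun ω => μExp (X ω)) ν := by rw [hνdef]; exact hμExpInt.restrict
  have hhhXν : Integrable (fun ω => hh (X ω)) ν := by rw [hνdef]; exact hhXint.restrict
  have hf'Y1ν : Integrable (fun ω => f' (X ω) * Y1 ω) ν :=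
    Integrable.bdd_mul hY1ν hf'Xaesmν (Filter.Eventually.of_forall hf'norm)
  have hf'Iν : Integrable (fun ω => f' (X ω) * μ0 (X ω)) ν :=
    Integrable.bdd_mul hIν hf'Xaesmν (Filter.Eventually.of_forall hf'norm)
  have hf'μEν : Integrable (fun ω => f' (X ω) * μExp (X ω)) ν :=
    Integrable.bdd_mul hμEν hf'Xaesmν (Filter.Eventually.of_forall hf'norm)
  -- ∫ D dν = ∫ f'(X) Y1 dν - ∫ f'(X) μ0(X) dν
  have hstep1 : ∫ ω, D ω ∂ν = ∫ ω, f' (X ω) * Y1 ω ∂ν - ∫ ω, f' (X ω) * μ0 (X ω) ∂ν := by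
    rw [integral_congr_ae hDq, ← integral_sub hf'Y1ν hf'Iν]
    refine integral_congr_ae (Filter.Eventually.of_forall fun ω => ?_)
    ring
  -- use hμExp to replace Y1 by μExp(X)
  have hμE_step : ∫ ω, f' (X ω) * Y1 ω ∂ν = ∫ ω, f' (X ω) * μExp (X ω) ∂ν := by
    have hcpos : (0:ℝ) < ε * ε := mul_pos hε hε
    have hg : ∀ x, |ε * ε * f' x| ≤ 1 := by
      intro x
      rw [abs_of_pos (mul_pos hcpos (hf'pos x))]
      calc ε * ε * f' x ≤ ε * ε * (ε * ε)⁻¹ :=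
            mul_le_mul_of_nonneg_left (hf'ub x) hcpos.le
        _ = 1 := mul_inv_cancel₀ (ne_of_gt hcpos)
    have h := hμEe (fun x => ε * ε * f' x) (measurable_const.mul hf'm) hg
    rw [hνA] at h
    have h' : ∫ ω, ε * ε * (f' (X ω) * Y ω) ∂ν = ∫ ω, ε * ε * (f' (X ω) * μExp (X ω)) ∂ν := by
      simpa [mul_assoc] using h
    rw [integral_const_mul, integral_const_mul] at h'
    have h'' := mul_left_cancel₀ (ne_of_gt hcpos) h'
    rw [← h'']
    refine integral_congr_ae ?_
    filter_upwards [hνmemA] with ω hA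
    have hT1 : T ω = 1 := hA.1
    rw [hcons ω, if_pos hT1]
  have hstep2 : ∫ ω, D ω ∂ν = ∫ ω, f' (X ω) * hh (X ω) ∂ν := by
    rw [hstep1, hμE_step, ← integral_sub hf'μEν hf'Iν]
    refine integral_congr_ae (Filter.Eventually.of_forall fun ω => ?_)
    show f' (X ω) * μExp (X ω) - f' (X ω) * μ0 (X ω) = f' (X ω) * (μExp (X ω) - μ0 (X ω))
    ring
  -- truncations
  set cl : ℕ → ℝ → ℝ := fun n y => max (min y ((n : ℝ) + 1)) (-((n : ℝ) + 1)) with hcldef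
  have hclm : ∀ n, Measurable (cl n) := fun n =>
    (measurable_id.min measurable_const).max measurable_const
  have hn1pos : ∀ n : ℕ, (0:ℝ) < (n:ℝ) + 1 := fun n => by positivity
  have hclabs : ∀ n y, |cl n y| ≤ |y| := by
    intro n y
    refine abs_le.2 ⟨?_, ?_⟩
    · refine le_max_of_le_left (le_min (neg_abs_le y) ?_)
      linarith [abs_nonneg y, hn1pos n]
    · refine max_le (le_trans (min_le_left _ _) (le_abs_self y)) ?_
      linarith [abs_nonneg y, hn1pos n]
  have hclabs2 : ∀ n y, |cl n y| ≤ (n:ℝ) + 1 := by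
    intro n y
    refine abs_le.2 ⟨le_max_right _ _, max_le (min_le_right _ _) ?_⟩
    linarith [hn1pos n]
  have hcltend : ∀ y : ℝ, Filter.Tendsto (fun n : ℕ => cl n y) Filter.atTop (nhds y) := by
    intro y
    obtain ⟨N, hN⟩ := exists_nat_ge |y|
    refine Filter.Tendsto.congr' ?_ (tendsto_const_nhds (x := y))
    rw [Filter.EventuallyEq, Filter.eventually_atTop]
    refine ⟨N, fun n hn => ?_⟩
    have h1 : |y| ≤ (n:ℝ) + 1 := by
      calc |y| ≤ (N:ℝ) := hN
        _ ≤ (n:ℝ) := by exact_mod_cast hn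
        _ ≤ (n:ℝ) + 1 := by linarith
    have h2 : y ≤ (n:ℝ) + 1 := le_trans (le_abs_self y) h1
    have h3 : -((n:ℝ) + 1) ≤ y := by
      have := neg_abs_le y
      linarith
    simp only [hcldef]
    rw [min_eq_left h2, max_eq_left h3]
  -- the truncated identity, from keyL
  have eqn : ∀ n : ℕ, ∫ ω, f' (X ω) * cl n (hh (X ω)) ∂ν = ∫ ω, cl n (hh (X ω)) ∂P := by
    intro n
    have hcpos : (0:ℝ) < ε * ε / ((n:ℝ) + 1) := by positivity
    set c : ℝ := ε * ε / ((n:ℝ) + 1) with hcdef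
    have hkb : ∀ x, |c * (f' x * cl n (hh x))| ≤ 1 := by
      intro x
      rw [abs_mul, abs_of_pos hcpos, abs_mul, abs_of_pos (hf'pos x)]
      have h1 : f' x * |cl n (hh x)| ≤ (ε * ε)⁻¹ * ((n:ℝ) + 1) :=
        mul_le_mul (hf'ub x) (hclabs2 n (hh x)) (abs_nonneg _)
          (inv_nonneg.2 (mul_pos hε hε).le)
      calc c * (f' x * |cl n (hh x)|) ≤ c * ((ε * ε)⁻¹ * ((n:ℝ) + 1)) :=
            mul_le_mul_of_nonneg_left h1 hcpos.le
        _ = 1 := by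
            rw [hcdef]
            field_simp
    have hkm : Measurable (fun x => c * (f' x * cl n (hh x))) :=
      measurable_const.mul (hf'm.mul ((hclm n).comp hhm))
    have h := keyL (fun x => c * (f' x * cl n (hh x))) hkm hkb
    have hL : ∫ ω, c * (f' (X ω) * cl n (hh (X ω))) ∂ν
        = c * ∫ ω, f' (X ω) * cl n (hh (X ω)) ∂ν := integral_const_mul c _
    have hR : ∫ ω, c * (f' (X ω) * cl n (hh (X ω))) * (β0 (X ω) * γ0 (X ω)) ∂P
        = c * ∫ ω, f' (X ω) * cl n (hh (X ω)) * (β0 (X ω) * γ0 (X ω)) ∂P := by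
      rw [← integral_const_mul]
      refine integral_congr_ae (Filter.Eventually.of_forall fun ω => ?_)
      ring
    rw [hL, hR] at h
    have h2 := mul_left_cancel₀ (ne_of_gt hcpos) h
    rw [h2]
    refine integral_congr_ae ?_
    filter_upwards [hclamp, hbdd] with ω hcl hb
    have hγne : γ0 (X ω) ≠ 0 := ne_of_gt (lt_of_lt_of_le hε hb.2.2.1)
    have hβne : β0 (X ω) ≠ 0 := ne_of_gt (lt_of_lt_of_le hε hb.1)
    have hne2 : γ0 (X ω) * β0 (X ω) ≠ 0 := mul_ne_zero hγne hβne
    rw [hcl.2.2, mul_comm (β0 (X ω)) (γ0 (X ω)), mul_right_comm,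
      inv_mul_cancel₀ hne2, one_mul]
  -- dominated convergence on both sides
  have tendsto1 : Filter.Tendsto (fun n : ℕ => ∫ ω, f' (X ω) * cl n (hh (X ω)) ∂ν)
      Filter.atTop (nhds (∫ ω, f' (X ω) * hh (X ω) ∂ν)) := by
    refine tendsto_integral_of_dominated_convergence
      (fun ω => (ε * ε)⁻¹ * |hh (X ω)|) ?_ ?_ ?_ ?_
    · intro n
      exact ((hf'm.comp hX).mul ((hclm n).comp (hhm.comp hX))).aestronglyMeasurable
    · exact hhhXν.abs.const_mul _
    · intro n
      refine Filter.Eventually.of_forall fun ω => ?_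
      rw [Real.norm_eq_abs, abs_mul, abs_of_pos (hf'pos _)]
      exact mul_le_mul (hf'ub _) (hclabs n _) (abs_nonneg _) (inv_nonneg.2 (mul_pos hε hε).le)
    · refine Filter.Eventually.of_forall fun ω => ?_
      exact (hcltend (hh (X ω))).const_mul _
  have tendsto2 : Filter.Tendsto (fun n : ℕ => ∫ ω, cl n (hh (X ω)) ∂P)
      Filter.atTop (nhds (∫ ω, hh (X ω) ∂P)) := by
    refine tendsto_integral_of_dominated_convergence
      (fun ω => |hh (X ω)|) ?_ ?_ ?_ ?_
    · intro n
      exact ((hclm n).comp (hhm.comp hX)).aestronglyMeasurable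
    · exact hhXint.abs
    · intro n
      refine Filter.Eventually.of_forall fun ω => ?_
      rw [Real.norm_eq_abs]
      exact hclabs n _
    · exact Filter.Eventually.of_forall fun ω => hcltend (hh (X ω))
  have key2 : ∫ ω, f' (X ω) * hh (X ω) ∂ν = ∫ ω, hh (X ω) ∂P :=
    tendsto_nhds_unique (tendsto1.congr eqn) tendsto2
  -- final assembly
  have hsplit : ∫ ω, Λ ω ∂P = ∫ ω, μ0 (X ω) ∂P + ∫ ω, D ω ∂P := by
    rw [← integral_add hIint hDint]
    refine integral_congr_ae (Filter.Eventually.of_forall fun ω => ?_)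
    show Λ ω = μ0 (X ω) + (Λ ω - μ0 (X ω))
    ring
  have hsub : ∫ ω, hh (X ω) ∂P = ∫ ω, μExp (X ω) ∂P - ∫ ω, μ0 (X ω) ∂P := by
    rw [← integral_sub hμExpInt hIint]
  rw [hsplit, hDP, hstep2, key2, hsub]
  ring
end
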